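/- The map Φ_ω : Sⁿ⁻¹ × ℝ_{≥0} → ℝⁿ, (x̄,τ) ↦ (τ^{ω₁}x̄₁, ..., τ^{ωₙ}x̄ₙ), restricted to Sⁿ⁻¹ × ℝ_{>0}, is a bijection onto ℝⁿ \ {0}. -/

import Mathlib

/-!
The weighted dilations `t • x = (t^{ω₁}x₁, …, t^{ωₙ}xₙ)` form an action of the
multiplicative group `ℝ_{>0}` on `ℝⁿ \ {0}`, and `Φ_ω(x̄, τ) = τ • x̄`. Since all weights
are positive, along each orbit `t ↦ ‖t • x‖²` is a continuous strictly increasing function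
of `t ≥ 0`, vanishing at `0` and tending to `∞`. So every orbit meets the unit sphere
exactly once, which is the claimed bijectivity.
-/

open Set Filter

section WeightedDilation

variable {ι : Type*} (ω : ι → ℕ)

def weightedDilation (t : ℝ) (x : ι → ℝ) : ι → ℝ := fun i => t ^ ω i * x i

@[simp]
theorem weightedDilation_apply (t : ℝ) (x : ι → ℝ) (i : ι) :
    weightedDilation ω t x i = t ^ ω i * x i :=
  rfl

@[simp]
theorem weightedDilation_one (x : ι → ℝ) : weightedDilation ω 1 x = x := by
  ext i; simp

theorem weightedDilation_weightedDilation (s t : ℝ) (x : ι → ℝ) :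
    weightedDilation ω s (weightedDilation ω t x) = weightedDilation ω (s * t) x := by
  ext i; simp [mul_pow, mul_assoc]

theorem weightedDilation_eq_zero_iff {t : ℝ} (ht : t ≠ 0) {x : ι → ℝ} :
    weightedDilation ω t x = 0 ↔ x = 0 := by
  simp [funext_iff, ht]

variable [Fintype ι] {ω}

theorem ne_zero_of_sum_sq_eq_one {x : ι → ℝ} (hx : ∑ i, x i ^ 2 = 1) : x ≠ 0 := by
  rintro rfl
  simp at hx

theorem strictMonoOn_sum_sq_weightedDilation (hω : ∀ i, 0 < ω i) {x : ι → ℝ}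
    (hx : x ≠ 0) :
    StrictMonoOn (fun t => ∑ i, weightedDilation ω t x i ^ 2) (Ici 0) := by
  intro s hs t _ hst
  obtain ⟨j, hj⟩ := Function.ne_iff.mp hx
  have hpow_lt : s ^ ω j < t ^ ω j := pow_lt_pow_left₀ hst hs (hω j).ne'
  refine Finset.sum_lt_sum (fun i _ => ?_) ⟨j, Finset.mem_univ j, ?_⟩
  · simp only [weightedDilation_apply, mul_pow]
    gcongr
    exact pow_nonneg hs _
  · simp only [weightedDilation_apply, mul_pow]
    have := pow_two_pos_of_ne_zero hj
    gcongr
    exact pow_nonneg hs _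

theorem tendsto_sum_sq_weightedDilation_atTop (hω : ∀ i, 0 < ω i) {x : ι → ℝ}
    (hx : x ≠ 0) :
    Tendsto (fun t => ∑ i, weightedDilation ω t x i ^ 2) atTop atTop := by
  obtain ⟨j, hj⟩ := Function.ne_iff.mp hx
  have hterm : Tendsto (fun t : ℝ => x j ^ 2 * t ^ (2 * ω j)) atTop atTop :=
    (tendsto_pow_atTop (by have := hω j; omega)).const_mul_atTop (pow_two_pos_of_ne_zero hj)
  refine tendsto_atTop_mono (fun t => ?_) hterm
  calc x j ^ 2 * t ^ (2 * ω j) = weightedDilation ω t x j ^ 2 := by simp [mul_pow, pow_mul]; ring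
    _ ≤ ∑ i, weightedDilation ω t x i ^ 2 :=
      Finset.single_le_sum (fun i _ => sq_nonneg _) (Finset.mem_univ j)

theorem exists_pos_sum_sq_weightedDilation_eq_one (hω : ∀ i, 0 < ω i) {x : ι → ℝ}
    (hx : x ≠ 0) : ∃ t, 0 < t ∧ ∑ i, weightedDilation ω t x i ^ 2 = 1 := by
  have hcont : Continuous fun t => ∑ i, weightedDilation ω t x i ^ 2 := by
    simp only [weightedDilation_apply]; fun_prop
  have hzero : ∑ i, weightedDilation ω 0 x i ^ 2 = 0 := by
    simp [zero_pow (hω _).ne']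
  have hone : (1 : ℝ) ∈ Ioi (∑ i, weightedDilation ω 0 x i ^ 2) := by
    rw [hzero, mem_Ioi]; exact one_pos
  exact intermediate_value_Ioi hcont.continuousOn
    (tendsto_sum_sq_weightedDilation_atTop hω hx) hone

end WeightedDilation

/-- The weighted blow-up map `Φ_ω(x̄,τ) = (τ^{ω₁}x̄₁, ..., τ^{ωₙ}x̄ₙ)`, restricted to
`Sⁿ⁻¹ × ℝ_{>0}`, is a bijection onto `ℝⁿ \ {0}`. -/
theorem blowup_bijOn
    (n : ℕ) (ω : Fin n → ℕ) (hω : ∀ i, 0 < ω i) :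
    Set.BijOn (fun p : (Fin n → ℝ) × ℝ => fun i => p.2 ^ ω i * p.1 i)
      {p : (Fin n → ℝ) × ℝ | (∑ i, p.1 i ^ 2) = 1 ∧ 0 < p.2}
      {y : Fin n → ℝ | y ≠ 0} := by
  change BijOn (fun p : (Fin n → ℝ) × ℝ => weightedDilation ω p.2 p.1) _ _
  refine ⟨?_, ?_, ?_⟩
  · rintro ⟨x, τ⟩ ⟨hx, hτ⟩ (hy : weightedDilation ω τ x = 0)
    exact ne_zero_of_sum_sq_eq_one hx ((weightedDilation_eq_zero_iff ω hτ.ne').mp hy)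
  · rintro ⟨x, τ⟩ ⟨hx, hτ⟩ ⟨x', σ⟩ ⟨hx', hσ⟩
      (heq : weightedDilation ω τ x = weightedDilation ω σ x')
    have hx'_eq : weightedDilation ω (σ⁻¹ * τ) x = x' := by
      rw [← weightedDilation_weightedDilation, heq, weightedDilation_weightedDilation,
        inv_mul_cancel₀ hσ.ne', weightedDilation_one]
    have hratio : σ⁻¹ * τ = 1 :=
      (strictMonoOn_sum_sq_weightedDilation hω (ne_zero_of_sum_sq_eq_one hx)).injOn
        (mem_Ici.mpr (by positivity)) (mem_Ici.mpr zero_le_one)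
        (by simp only [hx'_eq, weightedDilation_one, hx, hx'])
    rw [inv_mul_eq_one₀ hσ.ne'] at hratio
    subst hratio
    simpa [hτ.ne'] using hx'_eq
  · intro y hy
    obtain ⟨t, ht, hyt⟩ := exists_pos_sum_sq_weightedDilation_eq_one hω hy
    refine ⟨(weightedDilation ω t y, t⁻¹), ⟨hyt, inv_pos.mpr ht⟩, ?_⟩
    simp [weightedDilation_weightedDilation, ht.ne']
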